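/- Let B be an integral domain containing a field k of characteristic zero, and let D be a nonzero locally nilpotent derivation of B. Suppose there exists a nonzero locally nilpotent derivation E of B with DE = ED and ker(D) ≠ ker(E). Then ker(D) is non-rigid: there exists a nonzero locally nilpotent derivation of the ring ker(D). In fact, the restriction of E to ker(D) is such a derivation. -/

import Mathlib

variable {k B : Type*} [Field k] [CharZero k] [CommRing B] [IsDomain B] [Algebra k B]

/-- A derivation is locally nilpotent if every element is killed by some iterate. -/
def IsLocallyNilpotentDeriv {R A : Type*} [CommRing R] [CommRing A] [Algebra R A]
    (D : Derivation R A A) : Prop :=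
  ∀ x : A, ∃ n : ℕ, (⇑D)^[n] x = 0

/-- The kernel of a derivation, as a subalgebra. -/
def Derivation.kerSubalgebra {R A : Type*} [CommRing R] [CommRing A] [Algebra R A]
    (D : Derivation R A A) : Subalgebra R A where
  carrier := {b | D b = 0}
  mul_mem' := by
    intro a b ha hb
    simp only [Set.mem_setOf_eq] at *
    rw [D.leibniz]
    simp [ha, hb]
  add_mem' := by
    intro a b ha hb
    simp only [Set.mem_setOf_eq] at *
    simp [ha, hb]
  algebraMap_mem' := by intro r; simp [Set.mem_setOf_eq]


/-!
If `E` vanished on `ker D`, then `ker D ⊊ ker E`, so some `c ∈ ker E` has `D c ≠ 0`. Applying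
powers of `D`, which commute with `E`, turns `c` into a local slice `b ∈ ker E` of `D`, i.e.
`D b ≠ 0 = D² b`; put `s = D b ∈ ker D`. If `D^{n+2} x = 0`, then `D^{n+1}` kills
`(n + 1) s x - b D x`, so by induction on the `D`-degree `E` kills it as well as `D x`, which
leaves `(n + 1) s E x = 0`. In a domain of characteristic zero this gives `E x = 0`; as `D` is
locally nilpotent, `E = 0`.
-/

namespace Derivation

variable {R A : Type*} [CommRing R] [CommRing A] [Algebra R A]

@[simp]
theorem mem_kerSubalgebra {D : Derivation R A A} {a : A} : a ∈ D.kerSubalgebra ↔ D a = 0 :=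
  Iff.rfl

def IsLocalSlice (D : Derivation R A A) (b : A) : Prop :=
  D b ≠ 0 ∧ D (D b) = 0

theorem iterate_map_mul_of_map_eq_zero (D : Derivation R A A) {s : A} (hs : D s = 0) (n : ℕ)
    (z : A) : D^[n] (s * z) = s * D^[n] z := by
  induction n with
  | zero => rfl
  | succ n ih => simp only [Function.iterate_succ_apply', ih, leibniz, hs, smul_eq_mul, mul_zero,
      add_zero]

theorem iterate_succ_map_mul_of_map_map_eq_zero (D : Derivation R A A) {b : A}
    (hb : D (D b) = 0) (n : ℕ) (z : A) :
    D^[n + 1] (b * z) = b * D^[n + 1] z + (n + 1) • (D b * D^[n] z) := by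
  induction n with
  | zero => simp [leibniz, mul_comm]
  | succ n ih =>
    rw [Function.iterate_succ_apply' _ (n + 1), ih, map_add, map_nsmul, leibniz, leibniz, hb,
      ← Function.iterate_succ_apply' D (n + 1), ← Function.iterate_succ_apply' D n]
    simp only [smul_eq_mul, mul_zero, add_zero, succ_nsmul]
    ring

theorem IsLocallyNilpotentDeriv.exists_isLocalSlice_iterate {D : Derivation R A A}
    (hD : IsLocallyNilpotentDeriv D) {c : A} (hc : D c ≠ 0) :
    ∃ j, D.IsLocalSlice (D^[j] c) := by
  obtain ⟨n, hn⟩ := hD c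
  induction n generalizing c with
  | zero => exact (hc (by rw [show c = 0 from hn, map_zero])).elim
  | succ n ih =>
    by_cases hDDc : D (D c) = 0
    · exact ⟨0, hc, hDDc⟩
    · obtain ⟨j, hj⟩ := ih hDDc hn
      exact ⟨j + 1, hj⟩

section NoZeroDivisors

variable [NoZeroDivisors A] [CharZero A] {D E : Derivation R A A}

theorem map_eq_zero_of_iterate_map_eq_zero (hle : D.kerSubalgebra ≤ E.kerSubalgebra) {b : A}
    (hb : D.IsLocalSlice b) (hEb : E b = 0) : ∀ (n : ℕ) {x : A}, D^[n + 1] x = 0 → E x = 0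
  | 0, _, hx => hle hx
  | n + 1, x, hx => by
    have hEDx : E (D x) = 0 := map_eq_zero_of_iterate_map_eq_zero hle hb hEb n hx
    have hEDb : E (D b) = 0 := hle hb.2
    have hy : D^[n + 1] ((n + 1) • (D b * x) - b * D x) = 0 := by
      rw [iterate_map_sub, iterate_map_nsmul, iterate_map_mul_of_map_eq_zero D hb.2,
        iterate_succ_map_mul_of_map_map_eq_zero D hb.2, ← Function.iterate_succ_apply D (n + 1) x,
        hx, ← Function.iterate_succ_apply D n x]
      simp only [mul_zero, zero_add, sub_self]
    have hEy := map_eq_zero_of_iterate_map_eq_zero hle hb hEb n hy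
    simp only [map_sub, leibniz, hEDx, hEb, hEDb, smul_eq_mul, mul_zero, add_zero,
      sub_zero, nsmul_eq_mul] at hEy
    simpa [Nat.cast_add_one_ne_zero, hb.1] using hEy

theorem eq_zero_of_kerSubalgebra_le (hD : IsLocallyNilpotentDeriv D)
    (hle : D.kerSubalgebra ≤ E.kerSubalgebra) {b : A} (hb : D.IsLocalSlice b) (hEb : E b = 0) :
    E = 0 := by
  ext x
  obtain ⟨n, hn⟩ := hD x
  exact map_eq_zero_of_iterate_map_eq_zero hle hb hEb n
    (by rw [Function.iterate_succ_apply', hn, map_zero])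

end NoZeroDivisors

section Restrict

variable {D E : Derivation R A A} (hcomm : ∀ a, D (E a) = E (D a))

def restrictKerSubalgebra : Derivation R D.kerSubalgebra D.kerSubalgebra where
  toFun a := ⟨E a, by rw [mem_kerSubalgebra, hcomm, mem_kerSubalgebra.1 a.2, map_zero]⟩
  map_add' a c := Subtype.ext (map_add E a.1 c.1)
  map_smul' r a := Subtype.ext (map_smul E r a.1)
  map_one_eq_zero' := Subtype.ext E.map_one_eq_zero
  leibniz' a c := Subtype.ext (E.leibniz a.1 c.1)

@[simp]
theorem coe_restrictKerSubalgebra_apply (a : D.kerSubalgebra) :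
    (restrictKerSubalgebra hcomm a : A) = E a :=
  rfl

theorem restrictKerSubalgebra_eq_zero_iff :
    restrictKerSubalgebra hcomm = 0 ↔ D.kerSubalgebra ≤ E.kerSubalgebra := by
  refine ⟨fun h a ha => ?_, fun h => ?_⟩
  · exact congrArg Subtype.val (DFunLike.congr_fun h (⟨a, ha⟩ : D.kerSubalgebra))
  · ext a
    exact h a.2

theorem _root_.IsLocallyNilpotentDeriv.restrictKerSubalgebra (hE : IsLocallyNilpotentDeriv E) :
    IsLocallyNilpotentDeriv (Derivation.restrictKerSubalgebra hcomm) := by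
  intro a
  obtain ⟨n, hn⟩ := hE a
  have hsemiconj : Function.Semiconj Subtype.val (Derivation.restrictKerSubalgebra hcomm) E :=
    fun _ => rfl
  exact ⟨n, Subtype.ext ((hsemiconj.iterate_right n a).trans hn)⟩

end Restrict

end Derivation

open Derivation in
theorem kernel_nonrigid_of_commuting_general (D E : Derivation k B B) (hE : E ≠ 0)
    (hDL : IsLocallyNilpotentDeriv D) (hEL : IsLocallyNilpotentDeriv E)
    (hcomm : ∀ b : B, D (E b) = E (D b))
    (hker : D.kerSubalgebra ≠ E.kerSubalgebra) :
    ∃ E' : Derivation k (D.kerSubalgebra) (D.kerSubalgebra),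
      (∀ a : D.kerSubalgebra, (E' a : B) = E (a : B)) ∧
      E' ≠ 0 ∧ IsLocallyNilpotentDeriv E' := by
  refine ⟨restrictKerSubalgebra hcomm, coe_restrictKerSubalgebra_apply hcomm, fun h0 => hE ?_,
    hEL.restrictKerSubalgebra hcomm⟩
  have hle := (restrictKerSubalgebra_eq_zero_iff hcomm).1 h0
  obtain ⟨c, hEc, hDc⟩ := SetLike.exists_of_lt (lt_of_le_of_ne hle hker)
  obtain ⟨j, hj⟩ := hDL.exists_isLocalSlice_iterate hDc
  have : CharZero B := charZero_of_injective_algebraMap (algebraMap k B).injective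
  have hcomm' : Function.Commute E D := fun b => (hcomm b).symm
  refine eq_zero_of_kerSubalgebra_le hDL hle hj ?_
  rw [hcomm'.iterate_right j c, mem_kerSubalgebra.1 hEc, iterate_map_zero]

/-- If a nonzero locally nilpotent derivation D commutes with a nonzero locally
nilpotent derivation E with a different kernel, then ker D is non-rigid: the
restriction of E to ker D is a nonzero locally nilpotent derivation of ker D. -/
theorem kernel_nonrigid_of_commuting (D E : Derivation k B B) (hD : D ≠ 0) (hE : E ≠ 0)
    (hDL : IsLocallyNilpotentDeriv D) (hEL : IsLocallyNilpotentDeriv E)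
    (hcomm : ∀ b : B, D (E b) = E (D b))
    (hker : D.kerSubalgebra ≠ E.kerSubalgebra) :
    ∃ E' : Derivation k (D.kerSubalgebra) (D.kerSubalgebra),
      (∀ a : D.kerSubalgebra, (E' a : B) = E (a : B)) ∧
      E' ≠ 0 ∧ IsLocallyNilpotentDeriv E' :=
  kernel_nonrigid_of_commuting_general D E hE hDL hEL hcomm hker
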